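/- If for some nonzero linear functional a on ℝⁿ and constant c we have ⟨a, pᵢ⟩ = c for all i = 1,…,m, then for all λ₁,…,λ_m ≥ 0 the Minkowski sum λ₁Δ(p₁) + ⋯ + λ_mΔ(p_m) has m-dimensional Lebesgue measure zero, where Δ(p) = conv{(p,0), e_{n+1},…,e_m} ⊂ ℝ^m. -/

import Mathlib

/-!
Every `Δ(p)` lies in the hyperplane `⟪b, x⟫ = c` of `ℝ^m`, where `b = (a, c, …, c)`: on the vertex
`(p, 0)` this is `⟪a, p⟫ = c`, on each `e_j` with `j ≥ n` it is the coordinate `b_j = c`. Hence the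
Minkowski combination `∑ λᵢ Δ(pᵢ)` lies in the parallel hyperplane `⟪b, x⟫ = (∑ λᵢ) c`, which is
Lebesgue-null since `b ≠ 0`.
-/

open MeasureTheory Pointwise

noncomputable def mixedVol {E : Type*} [AddCommMonoid E] [MeasureSpace E]
    (m : ℕ) (K : Fin m → Set E) : ℝ :=
  ∑ S : Finset (Fin m), (-1 : ℝ) ^ (m - S.card) * (volume (∑ i ∈ S, K i)).toReal

noncomputable def emb (n m : ℕ) (p : EuclideanSpace ℝ (Fin n)) : EuclideanSpace ℝ (Fin m) :=
  WithLp.toLp 2 (fun (i : Fin m) => if h : (i : ℕ) < n then p ⟨i, h⟩ else 0)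

noncomputable def simplexOf (n m : ℕ) (p : EuclideanSpace ℝ (Fin n)) :
    Set (EuclideanSpace ℝ (Fin m)) :=
  convexHull ℝ (insert (emb n m p)
    {x | ∃ j : Fin m, n ≤ (j : ℕ) ∧ x = EuclideanSpace.single j 1})

open scoped RealInnerProductSpace

theorem MeasureTheory.Measure.addHaar_linearMap_preimage_singleton {E : Type*}
    [NormedAddCommGroup E] [NormedSpace ℝ E] [FiniteDimensional ℝ E] [MeasurableSpace E]
    [BorelSpace E] (μ : Measure E) [μ.IsAddHaarMeasure] {f : E →ₗ[ℝ] ℝ} (hf : f ≠ 0) (t : ℝ) :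
    μ (f ⁻¹' {t}) = 0 := by
  obtain ⟨v, hv⟩ : ∃ v, f v ≠ 0 := by simpa [LinearMap.ext_iff] using hf
  set x₀ := (t / f v) • v
  have hx₀ : f x₀ = t := by simp [x₀, div_mul_cancel₀ _ hv]
  have hfiber : f ⁻¹' {t} = (· + -x₀) ⁻¹' (LinearMap.ker f : Set E) := by
    ext x
    simp [hx₀, add_neg_eq_zero]
  rw [hfiber, measure_preimage_add_right]
  exact Measure.addHaar_submodule μ _ (by simpa [LinearMap.ker_eq_top] using hf)

theorem finset_sum_smul_subset_preimage_singleton {ι E : Type*} [AddCommMonoid E] [Module ℝ E]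
    (f : E →ₗ[ℝ] ℝ) (s : Finset ι) (K : ι → Set E) (c lam : ι → ℝ)
    (hK : ∀ i ∈ s, K i ⊆ f ⁻¹' {c i}) :
    ∑ i ∈ s, lam i • K i ⊆ f ⁻¹' {∑ i ∈ s, lam i * c i} := by
  intro x hx
  obtain ⟨g, hg, rfl⟩ := (Set.mem_finsetSum _ _ _).mp hx
  have hfg : ∀ i ∈ s, f (g i) = lam i * c i := by
    intro i hi
    obtain ⟨y, hy, hyg⟩ := hg hi
    have hfy : f y = c i := hK i hi hy
    simp [← hyg, hfy]
  simp [Finset.sum_congr rfl hfg]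

noncomputable def liftNormal (n m : ℕ) (a : EuclideanSpace ℝ (Fin n)) (c : ℝ) :
    EuclideanSpace ℝ (Fin m) :=
  WithLp.toLp 2 fun j => if h : (j : ℕ) < n then a ⟨j, h⟩ else c

theorem inner_liftNormal_emb {n m : ℕ} (hnm : n ≤ m) (a p : EuclideanSpace ℝ (Fin n)) (c : ℝ) :
    ⟪liftNormal n m a c, emb n m p⟫ = ⟪a, p⟫ := by
  obtain ⟨k, rfl⟩ := Nat.exists_eq_add_of_le hnm
  simp [PiLp.inner_apply, liftNormal, emb, Fin.sum_univ_add, mul_comm]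

theorem inner_liftNormal_single {n m : ℕ} (a : EuclideanSpace ℝ (Fin n)) (c : ℝ) {j : Fin m}
    (hj : n ≤ j) : ⟪liftNormal n m a c, EuclideanSpace.single j 1⟫ = c := by
  simp [EuclideanSpace.inner_single_right, liftNormal, Nat.not_lt.mpr hj]

theorem liftNormal_ne_zero {n m : ℕ} (hnm : n ≤ m) {a : EuclideanSpace ℝ (Fin n)} (ha : a ≠ 0)
    (c : ℝ) : liftNormal n m a c ≠ 0 := by
  obtain ⟨i, hi⟩ : ∃ i, a i ≠ 0 := by
    by_contra! h
    exact ha (PiLp.ext h)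
  refine fun h => hi ?_
  simpa [liftNormal] using
    congrArg (fun x : EuclideanSpace ℝ (Fin m) => x ⟨i, i.isLt.trans_le hnm⟩) h

theorem simplexOf_subset_inner_eq {n m : ℕ} (hnm : n ≤ m) {a p : EuclideanSpace ℝ (Fin n)}
    {c : ℝ} (hpc : ⟪a, p⟫ = c) :
    simplexOf n m p ⊆ innerₛₗ ℝ (liftNormal n m a c) ⁻¹' {c} := by
  refine convexHull_min ?_ ((convex_singleton c).linear_preimage _)
  rintro x (rfl | ⟨j, hj, rfl⟩)
  · simpa using (inner_liftNormal_emb hnm a p c).trans hpc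
  · simpa using inner_liftNormal_single a c hj

open scoped RealInnerProductSpace in
theorem stmt5_general (n m : ℕ) (hm : n < m)
    (p : Fin m → EuclideanSpace ℝ (Fin n))
    (a : EuclideanSpace ℝ (Fin n)) (ha : a ≠ 0) (c : ℝ)
    (hpc : ∀ i, ⟪a, p i⟫ = c)
    (lam : Fin m → ℝ) :
    volume (∑ i : Fin m, lam i • simplexOf n m (p i)) = 0 := by
  set b := liftNormal n m a c
  have hf : innerₛₗ ℝ b ≠ 0 := fun h =>
    liftNormal_ne_zero hm.le ha c (by simpa using LinearMap.congr_fun h b)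
  have hsum : ∑ i, lam i • simplexOf n m (p i) ⊆ innerₛₗ ℝ b ⁻¹' {∑ i, lam i * c} :=
    finset_sum_smul_subset_preimage_singleton _ _ _ _ lam
      fun i _ => simplexOf_subset_inner_eq hm.le (hpc i)
  exact measure_mono_null hsum (Measure.addHaar_linearMap_preimage_singleton volume hf _)

open scoped RealInnerProductSpace in
theorem stmt5 (n m : ℕ) (hn : 0 < n) (hm : n < m)
    (p : Fin m → EuclideanSpace ℝ (Fin n))
    (a : EuclideanSpace ℝ (Fin n)) (ha : a ≠ 0) (c : ℝ)
    (hpc : ∀ i, ⟪a, p i⟫ = c)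
    (lam : Fin m → ℝ) (hlam : ∀ i, 0 ≤ lam i) :
    volume (∑ i : Fin m, lam i • simplexOf n m (p i)) = 0 :=
  stmt5_general n m hm p a ha c hpc lam
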